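/- arXiv:2302.14701 — 6 statements merged into one kernel-verified Lean document; each statement's English description precedes it below -/
import Mathlib

section
/- Fix an integer k ≥ 2. In the two-player contest game with qualities 1,...,k+1, efforts f_q = q, proportional allocation payments Uᵢ(q₁,q₂) = qᵢ/(q₁+q₂) − sᵢ·qᵢ, where s₁ = 1/(4k−2+1/(k+1)) and s₂ = 1/(4k+2+1/(k+1)), the four quality vectors (k,k+1), (k−1,k+1), (k−1,k), (k,k) form a strict best-response improvement cycle: U₁(k−1,k+1) > U₁(k,k+1), U₂(k−1,k) > U₂(k−1,k+1), U₁(k,k) > U₁(k−1,k), and U₂(k,k+1) > U₂(k,k). -/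
lemma aux_ineqs (K : ℝ) (hK : 2 ≤ K) :
    let s₁ : ℝ := 1 / (4 * K - 2 + 1 / (K + 1))
    let s₂ : ℝ := 1 / (4 * K + 2 + 1 / (K + 1))
    ((K - 1) / (K - 1 + (K + 1)) - s₁ * (K - 1) > K / (K + (K + 1)) - s₁ * K) ∧
    (K / (K - 1 + K) - s₂ * K > (K + 1) / (K - 1 + (K + 1)) - s₂ * (K + 1)) ∧
    (K / (K + K) - s₁ * K > (K - 1) / (K - 1 + K) - s₁ * (K - 1)) ∧
    ((K + 1) / (K + (K + 1)) - s₂ * (K + 1) > K / (K + K) - s₂ * K) := by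
  intro s₁ s₂
  have h1 : (0:ℝ) < K + 1 := by linarith
  have h2 : (0:ℝ) < 2 * K := by linarith
  have h3 : (0:ℝ) < 2 * K + 1 := by linarith
  have h4 : (0:ℝ) < 2 * K - 1 := by linarith
  have hq : (0:ℝ) < 1 / (K + 1) := by positivity
  have hp1 : (0:ℝ) < 4 * K ^ 2 + 2 * K - 1 := by nlinarith
  have hp2 : (0:ℝ) < 4 * K ^ 2 + 6 * K + 3 := by nlinarith
  have e1 : s₁ = (K + 1) / (4 * K ^ 2 + 2 * K - 1) := by
    simp only [s₁]
    rw [div_eq_div_iff (by linarith) hp1.ne']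
    field_simp
    ring
  have e2 : s₂ = (K + 1) / (4 * K ^ 2 + 6 * K + 3) := by
    simp only [s₂]
    rw [div_eq_div_iff (by linarith) hp2.ne']
    field_simp
    ring
  have n1 : (2*K:ℝ) ≠ 0 := h2.ne'
  have n2 : (2*K+1:ℝ) ≠ 0 := h3.ne'
  have n3 : (2*K-1:ℝ) ≠ 0 := h4.ne'
  have np1 : (4 * K ^ 2 + 2 * K - 1:ℝ) ≠ 0 := hp1.ne'
  have np2 : (4 * K ^ 2 + 6 * K + 3:ℝ) ≠ 0 := hp2.ne'
  rw [e1, e2]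
  refine ⟨?_, ?_, ?_, ?_⟩
  · rw [gt_iff_lt, ← sub_pos]
    have key : (K - 1) / (K - 1 + (K + 1)) - (K + 1) / (4 * K ^ 2 + 2 * K - 1) * (K - 1)
        - (K / (K + (K + 1)) - (K + 1) / (4 * K ^ 2 + 2 * K - 1) * K)
        = (K + 1) / ((2*K) * (2*K+1) * (4 * K ^ 2 + 2 * K - 1)) := by
      rw [show K - 1 + (K + 1) = 2*K by ring, show K + (K + 1) = 2*K+1 by ring]
      have : K * (K * 4 + 2) - 1 ≠ 0 := by nlinarith
      have : K * 2 - 1 ≠ 0 := by linarith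
      field_simp
      ring
    rw [key]
    apply div_pos (by nlinarith) (by positivity)
  · rw [gt_iff_lt, ← sub_pos]
    have key : K / (K - 1 + K) - (K + 1) / (4 * K ^ 2 + 6 * K + 3) * K
        - ((K + 1) / (K - 1 + (K + 1)) - (K + 1) / (4 * K ^ 2 + 6 * K + 3) * (K + 1))
        = (K + 3) / ((2*K-1) * (2*K) * (4 * K ^ 2 + 6 * K + 3)) := by
      rw [show K - 1 + K = 2*K-1 by ring, show K - 1 + (K + 1) = 2*K by ring]
      have : K * (K * 4 + 2) - 1 ≠ 0 := by nlinarith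
      have : K * 2 - 1 ≠ 0 := by linarith
      field_simp
      ring
    rw [key]
    apply div_pos (by nlinarith) (by positivity)
  · rw [gt_iff_lt, ← sub_pos]
    have key : K / (K + K) - (K + 1) / (4 * K ^ 2 + 2 * K - 1) * K
        - ((K - 1) / (K - 1 + K) - (K + 1) / (4 * K ^ 2 + 2 * K - 1) * (K - 1))
        = K / ((2*K) * (2*K-1) * (4 * K ^ 2 + 2 * K - 1)) := by
      rw [show K + K = 2*K by ring, show K - 1 + K = 2*K-1 by ring]
      have : K * (K * 4 + 2) - 1 ≠ 0 := by nlinarith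
      have : K * 2 - 1 ≠ 0 := by linarith
      field_simp
      ring
    rw [key]
    apply div_pos (by nlinarith) (by positivity)
  · rw [gt_iff_lt, ← sub_pos]
    have key : (K + 1) / (K + (K + 1)) - (K + 1) / (4 * K ^ 2 + 6 * K + 3) * (K + 1)
        - (K / (K + K) - (K + 1) / (4 * K ^ 2 + 6 * K + 3) * K)
        = K / ((2*K+1) * (2*K) * (4 * K ^ 2 + 6 * K + 3)) := by
      rw [show K + (K + 1) = 2*K+1 by ring, show K + K = 2*K by ring]
      field_simp
      ring
    rw [key]
    apply div_pos (by nlinarith) (by positivity)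

/-- The quality vectors (k,k+1), (k−1,k+1), (k−1,k), (k,k) form a strict
improvement cycle in the two-player contest with proportional allocation. -/
theorem stmt_5 (k : ℕ) (hk : 2 ≤ k) :
    let K : ℝ := (k : ℝ)
    let s₁ : ℝ := 1 / (4 * K - 2 + 1 / (K + 1))
    let s₂ : ℝ := 1 / (4 * K + 2 + 1 / (K + 1))
    let U₁ : ℝ → ℝ → ℝ := fun a b => a / (a + b) - s₁ * a
    let U₂ : ℝ → ℝ → ℝ := fun a b => b / (a + b) - s₂ * b
    U₁ (K - 1) (K + 1) > U₁ K (K + 1) ∧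
    U₂ (K - 1) K > U₂ (K - 1) (K + 1) ∧
    U₁ K K > U₁ (K - 1) K ∧
    U₂ K (K + 1) > U₂ K K := by
  intro K s₁ s₂ U₁ U₂
  have hK : (2:ℝ) ≤ K := by
    simp only [K]
    exact_mod_cast hk
  exact aux_ineqs K hK
end

section
/- Every finite strategic game that admits an exact potential function has a pure Nash equilibrium. (An exact potential Φ satisfies Uᵢ(q'ᵢ,q₋ᵢ) − Uᵢ(qᵢ,q₋ᵢ) = Φ(q'ᵢ,q₋ᵢ) − Φ(qᵢ,q₋ᵢ) for all players i, strategies qᵢ, q'ᵢ, and partial profiles q₋ᵢ.) -/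
/-- Every finite strategic game admitting an exact potential has a pure Nash
equilibrium. -/
theorem stmt_9 {ι : Type*} [Fintype ι] [DecidableEq ι] [Nonempty ι]
    (S : ι → Type*) [∀ i, Fintype (S i)] [∀ i, Nonempty (S i)]
    (U : ∀ _ : ι, (∀ j, S j) → ℝ) (Φ : (∀ j, S j) → ℝ)
    (hΦ : ∀ (i : ι) (q : ∀ j, S j) (a : S i),
      U i (Function.update q i a) - U i q = Φ (Function.update q i a) - Φ q) :
    ∃ q : ∀ j, S j, ∀ (i : ι) (a : S i), U i (Function.update q i a) ≤ U i q := by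
  obtain ⟨q, hq⟩ := Finite.exists_max Φ
  exact ⟨q, fun i a => by have := hΦ i q a; have := hq (Function.update q i a); linarith⟩
end

section
/- Every finite strategic game that admits a generalized ordinal potential (a function Φ such that Uᵢ(qᵢ,q₋ᵢ) > Uᵢ(q'ᵢ,q₋ᵢ) implies Φ(qᵢ,q₋ᵢ) > Φ(q'ᵢ,q₋ᵢ)) has no infinite improvement paths; i.e., it has the Finite Improvement Property. -/
/-- Every finite strategic game admitting a generalized ordinal potential has no
infinite improvement paths (the Finite Improvement Property). -/
theorem stmt_10 {ι : Type*} [Fintype ι] [DecidableEq ι]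
    (S : ι → Type*) [∀ i, Fintype (S i)]
    (U : ∀ _ : ι, (∀ j, S j) → ℝ) (Φ : (∀ j, S j) → ℝ)
    (hΦ : ∀ (i : ι) (q : ∀ j, S j) (a : S i),
      U i q < U i (Function.update q i a) → Φ q < Φ (Function.update q i a)) :
    ¬ ∃ p : ℕ → (∀ j, S j), ∀ t : ℕ, ∃ (i : ι) (a : S i),
        p (t + 1) = Function.update (p t) i a ∧ U i (p t) < U i (p (t + 1)) := by
  rintro ⟨p, hp⟩
  have mono : StrictMono (fun t => Φ (p t)) := by
    apply strictMono_nat_of_lt_succ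
    intro t
    obtain ⟨i, a, heq, hlt⟩ := hp t
    rw [heq] at hlt ⊢
    exact hΦ i (p t) a hlt
  have hinj : Function.Injective p := fun m n h => mono.injective (by simp [h])
  obtain ⟨m, n, hne, h⟩ := Finite.exists_ne_map_eq_of_infinite p
  exact hne (hinj h)
end

section
/- Consider a contest game with n ≥ 2 players, qualities 1,...,Q (Q ≥ 2), strictly increasing efforts f, arbitrary skills, arbitrary skill-effort cost function Λ, and a payment function P that is player-invariant and oblivious, i.e., the payment to a player choosing quality q in quality vector 𝐪 equals a function P(N_𝐪(q), f_q) of the load on q and the effort f_q only, the same for all players. Then the function Φ(𝐪) = Σ_{q∈[Q]} Γ(N_𝐪(q)) − Σ_{k∈[n]} Λ(s_k, f_{q_k}), where Γ(m) = Σ_{j=1}^{m} P(j, f_q) for the quality q in question (with Γ(0)=0), is an exact potential for the game; consequently the game has a pure Nash equilibrium. -/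
open Finset

private lemma card_filter_update' {n Q : ℕ} (q : Fin n → Fin Q) (i : Fin n) (a b : Fin Q) :
    (univ.filter fun k => Function.update q i a k = b).card =
      ((univ.erase i).filter fun k => q k = b).card + if a = b then 1 else 0 := by
  have h1 : (univ : Finset (Fin n)) = insert i (univ.erase i) :=
    (insert_erase (mem_univ i)).symm
  have h2 : ((univ.erase i).filter fun k => Function.update q i a k = b)
      = ((univ.erase i).filter fun k => q k = b) := by
    apply filter_congr
    intro k hk
    rw [Function.update_of_ne (ne_of_mem_erase hk)]
  rw [h1, filter_insert]
  simp only [Function.update_self]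
  split
  · next h => rw [card_insert_of_notMem (by simp), h2,
      Finset.erase_insert (notMem_erase i univ)]
  · next h =>
      rw [h2, Finset.erase_insert (notMem_erase i univ)]
      omega

private lemma key_pot {n Q : ℕ} (f : Fin Q → ℝ) (s : Fin n → ℝ) (Λ : ℝ → ℝ → ℝ)
    (P : ℕ → ℝ → ℝ) (i : Fin n) (q : Fin n → Fin Q) (a : Fin Q) :
    (P ((univ.filter fun k => Function.update q i a k = a).card) (f a) - Λ (s i) (f a))
    - (P ((univ.filter fun k => q k = q i).card) (f (q i)) - Λ (s i) (f (q i)))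
    = ((∑ b : Fin Q, ∑ j ∈ Icc 1 ((univ.filter fun k => Function.update q i a k = b).card), P j (f b))
        - ∑ k, Λ (s k) (f (Function.update q i a k)))
      - ((∑ b : Fin Q, ∑ j ∈ Icc 1 ((univ.filter fun k => q k = b).card), P j (f b))
        - ∑ k, Λ (s k) (f (q k))) := by
  by_cases hai : a = q i
  · subst hai
    rw [Function.update_eq_self]
    ring
  -- counts excluding player i
  set c : Fin Q → ℕ := fun b => ((univ.erase i).filter fun k => q k = b).card with hc
  have h1 : ∀ b, (univ.filter fun k => Function.update q i a k = b).card
      = c b + if a = b then 1 else 0 := fun b => card_filter_update' q i a b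
  have h2 : ∀ b, (univ.filter fun k => q k = b).card
      = c b + if q i = b then 1 else 0 := by
    intro b
    have := card_filter_update' q i (q i) b
    rwa [Function.update_eq_self] at this
  -- Λ-sum difference
  have hΛ : ∑ k, Λ (s k) (f (Function.update q i a k))
      = Λ (s i) (f a) + ∑ k ∈ univ.erase i, Λ (s k) (f (q k)) := by
    rw [← Finset.add_sum_erase _ _ (mem_univ i)]
    congr 1
    · rw [Function.update_self]
    · apply Finset.sum_congr rfl
      intro k hk
      rw [Function.update_of_ne (ne_of_mem_erase hk)]
  have hΛ2 : ∑ k, Λ (s k) (f (q k))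
      = Λ (s i) (f (q i)) + ∑ k ∈ univ.erase i, Λ (s k) (f (q k)) :=
    (Finset.add_sum_erase _ _ (mem_univ i)).symm
  -- Γ-sum difference
  have hsucc : ∀ (m : ℕ) (b : Fin Q),
      ∑ j ∈ Icc 1 (m + 1), P j (f b) = (∑ j ∈ Icc 1 m, P j (f b)) + P (m + 1) (f b) := by
    intro m b
    exact Finset.sum_Icc_succ_top (Nat.succ_le_succ (Nat.zero_le m)) _
  set D : Fin Q → ℝ := fun b =>
    (∑ j ∈ Icc 1 (c b + if a = b then 1 else 0), P j (f b))
      - ∑ j ∈ Icc 1 (c b + if q i = b then 1 else 0), P j (f b) with hD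
  have hDval : ∀ b, D b = (if a = b then P (c b + 1) (f b) else 0)
      - (if q i = b then P (c b + 1) (f b) else 0) := by
    intro b
    simp only [hD]
    by_cases hab : a = b <;> by_cases hqb : q i = b <;>
      simp [hab, hqb, hsucc]
  have hΓ : (∑ b : Fin Q, ∑ j ∈ Icc 1 ((univ.filter fun k => Function.update q i a k = b).card), P j (f b))
      - (∑ b : Fin Q, ∑ j ∈ Icc 1 ((univ.filter fun k => q k = b).card), P j (f b))
      = ∑ b : Fin Q, D b := by
    rw [← Finset.sum_sub_distrib]
    apply Finset.sum_congr rfl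
    intro b _
    rw [h1, h2, hD]
  have hDsum : ∑ b : Fin Q, D b = P (c a + 1) (f a) - P (c (q i) + 1) (f (q i)) := by
    have hsub : ∑ b : Fin Q, D b = ∑ b ∈ ({a, q i} : Finset (Fin Q)), D b := by
      refine (Finset.sum_subset (subset_univ _) ?_).symm
      intro b _ hb
      simp only [mem_insert, mem_singleton, not_or] at hb
      rw [hDval]
      simp [Ne.symm hb.1, Ne.symm hb.2]
    rw [hsub, Finset.sum_pair hai, hDval, hDval]
    simp [if_neg hai, if_neg (Ne.symm hai)]
    ring
  have ha' : (univ.filter fun k => Function.update q i a k = a).card = c a + 1 := by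
    rw [h1]; simp
  have hqi' : (univ.filter fun k => q k = q i).card = c (q i) + 1 := by
    rw [h2]; simp
  rw [ha', hqi', hΛ, hΛ2]
  linarith [hΓ, hDsum]

/-- The contest game with arbitrary players and a player-invariant, oblivious
payment function `P` (depending only on the load on the chosen quality and its
effort) admits the exact potential `Φ` and hence a pure Nash equilibrium. -/
theorem stmt_11 (n Q : ℕ) (hn : 2 ≤ n) (hQ : 2 ≤ Q)
    (f : Fin Q → ℝ) (hf : StrictMono f)
    (s : Fin n → ℝ) (Λ : ℝ → ℝ → ℝ)
    (P : ℕ → ℝ → ℝ) :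
    let load : (Fin n → Fin Q) → Fin Q → ℕ :=
      fun q a => (Finset.univ.filter fun k => q k = a).card
    let U : Fin n → (Fin n → Fin Q) → ℝ :=
      fun i q => P (load q (q i)) (f (q i)) - Λ (s i) (f (q i))
    let Φ : (Fin n → Fin Q) → ℝ :=
      fun q => (∑ a : Fin Q, ∑ j ∈ Finset.Icc 1 (load q a), P j (f a)) -
        ∑ k : Fin n, Λ (s k) (f (q k))
    (∀ (i : Fin n) (q : Fin n → Fin Q) (a : Fin Q),
        U i (Function.update q i a) - U i q = Φ (Function.update q i a) - Φ q) ∧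
    (∃ q : Fin n → Fin Q, ∀ (i : Fin n) (a : Fin Q),
        U i (Function.update q i a) ≤ U i q) := by
  intro load U Φ
  have hQ0 : 0 < Q := by omega
  have hexact : ∀ (i : Fin n) (q : Fin n → Fin Q) (a : Fin Q),
      U i (Function.update q i a) - U i q = Φ (Function.update q i a) - Φ q := by
    intro i q a
    have := key_pot f s Λ P i q a
    simpa only [U, Φ, load, Function.update_self] using this
  refine ⟨hexact, ?_⟩
  have : Nonempty (Fin Q) := ⟨⟨0, hQ0⟩⟩
  obtain ⟨q, hq⟩ := Finite.exists_max Φ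
  refine ⟨q, fun i a => ?_⟩
  have h := hexact i q a
  have := hq (Function.update q i a)
  linarith
end

section
/- In the contest game with equal sharing per quality payments — player i choosing quality qᵢ receives C·f_{qᵢ}/N_𝐪(qᵢ) for a fixed constant C > 0 — and utilities Uᵢ(𝐪) = C·f_{qᵢ}/N_𝐪(qᵢ) − Λ(sᵢ, f_{qᵢ}), a pure Nash equilibrium exists for all n ≥ 2, Q ≥ 2, strictly increasing efforts f, skills s, and cost function Λ. -/
/-- The contest game with equal sharing per quality payments has a pure Nash
equilibrium. -/
theorem stmt_12 (n Q : ℕ) (hn : 2 ≤ n) (hQ : 2 ≤ Q)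
    (f : Fin Q → ℝ) (hf : StrictMono f)
    (s : Fin n → ℝ) (Λ : ℝ → ℝ → ℝ) (C : ℝ) (hC : 0 < C) :
    let load : (Fin n → Fin Q) → Fin Q → ℕ :=
      fun q a => (Finset.univ.filter fun k => q k = a).card
    let U : Fin n → (Fin n → Fin Q) → ℝ :=
      fun i q => C * f (q i) / (load q (q i) : ℝ) - Λ (s i) (f (q i))
    ∃ q : Fin n → Fin Q, ∀ (i : Fin n) (a : Fin Q),
      U i (Function.update q i a) ≤ U i q := by
  intro load U
  classical
  set G : Fin Q → ℕ → ℝ := fun c m => ∑ k ∈ Finset.range m, C * f c / (k + 1) with hG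
  set Φ : (Fin n → Fin Q) → ℝ :=
    fun q => (∑ c : Fin Q, G c (load q c)) - ∑ j, Λ (s j) (f (q j)) with hΦ
  have key : ∀ (q : Fin n → Fin Q) (i : Fin n) (a : Fin Q),
      U i (Function.update q i a) - U i q = Φ (Function.update q i a) - Φ q := by
    intro q i a
    by_cases hab : a = q i
    · subst hab; simp
    set q' := Function.update q i a with hq'
    have hq'i : q' i = a := Function.update_self i a q
    -- loads
    have hfa : (Finset.univ.filter fun k => q' k = a)
        = insert i (Finset.univ.filter fun k => q k = a) := by
      ext k
      by_cases hk : k = i <;> simp [hq', Function.update_apply, hk, Ne.symm hab]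
    have hia : i ∉ (Finset.univ.filter fun k => q k = a) := by
      simp [Ne.symm hab]
    have hLa : load q' a = load q a + 1 := by
      simp only [load, hfa]
      rw [Finset.card_insert_of_notMem hia]
    have hfb : (Finset.univ.filter fun k => q' k = q i)
        = (Finset.univ.filter fun k => q k = q i).erase i := by
      ext k
      by_cases hk : k = i <;> simp [hq', Function.update_apply, hk, Ne.symm hab, hab]
    have hib : i ∈ (Finset.univ.filter fun k => q k = q i) := by simp
    have hLb : load q' (q i) = load q (q i) - 1 := by
      simp only [load, hfb]
      rw [Finset.card_erase_of_mem hib]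
    have hLbpos : 1 ≤ load q (q i) := Finset.card_pos.mpr ⟨i, hib⟩
    have hLc : ∀ c : Fin Q, c ≠ a → c ≠ q i → load q' c = load q c := by
      intro c hca hcb
      have : (Finset.univ.filter fun k => q' k = c)
          = (Finset.univ.filter fun k => q k = c) := by
        ext k
        by_cases hk : k = i <;>
          simp [hq', Function.update_apply, hk, Ne.symm hca, Ne.symm hcb]
      simp only [load, this]
    -- potential difference in the G-part
    have hsum : (∑ c : Fin Q, G c (load q' c)) - (∑ c : Fin Q, G c (load q c))
        = (G a (load q' a) - G a (load q a)) + (G (q i) (load q' (q i)) - G (q i) (load q (q i))) := by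
      rw [← Finset.sum_sub_distrib]
      rw [← Finset.sum_subset (Finset.subset_univ ({a, q i} : Finset (Fin Q)))]
      · rw [Finset.sum_pair hab]
      · intro c _ hc
        simp only [Finset.mem_insert, Finset.mem_singleton, not_or] at hc
        rw [hLc c hc.1 hc.2]; ring
    have hGa : G a (load q' a) - G a (load q a) = C * f a / (load q' a : ℝ) := by
      rw [hLa, hG]
      simp [Finset.sum_range_succ]
    have hGb : G (q i) (load q' (q i)) - G (q i) (load q (q i))
        = -(C * f (q i) / (load q (q i) : ℝ)) := by
      obtain ⟨m, hm⟩ : ∃ m, load q (q i) = m + 1 := ⟨load q (q i) - 1, by omega⟩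
      rw [hLb, hm, hG]
      simp [Finset.sum_range_succ]
    -- cost difference
    have hcost : (∑ j, Λ (s j) (f (q' j))) - (∑ j, Λ (s j) (f (q j)))
        = Λ (s i) (f a) - Λ (s i) (f (q i)) := by
      rw [← Finset.sum_sub_distrib, Finset.sum_eq_single i]
      · rw [hq'i]
      · intro j _ hj
        rw [hq', Function.update_of_ne hj]; ring
      · intro h; exact absurd (Finset.mem_univ i) h
    have hU' : U i q' = C * f a / (load q' a : ℝ) - Λ (s i) (f a) := by
      simp only [U, hq'i]
    have hUq : U i q = C * f (q i) / (load q (q i) : ℝ) - Λ (s i) (f (q i)) := rfl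
    have hΦd : Φ q' - Φ q
        = (G a (load q' a) - G a (load q a))
          + (G (q i) (load q' (q i)) - G (q i) (load q (q i)))
          - (Λ (s i) (f a) - Λ (s i) (f (q i))) := by
      simp only [hΦ]
      rw [← hsum, ← hcost]; ring
    rw [hU', hUq, hΦd, hGa, hGb]; ring
  obtain ⟨q, -, hq⟩ := Finset.exists_max_image Finset.univ Φ
    ⟨fun _ => ⟨0, by omega⟩, Finset.mem_univ _⟩
  refine ⟨q, fun i a => ?_⟩
  have h1 := key q i a
  have h2 := hq _ (Finset.mem_univ (Function.update q i a))
  linarith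
end

section
/- Let q be a quality vector in a contest game with players ordered so that s₁ ≥ s₂ ≥ ... ≥ s_n, and suppose q is not contiguous (an inversion exists: players i < k with q_i > q_k). Let i be the earliest inversion witness and k the earliest partner making an inversion with i. Form q' by swapping the qualities of i and k. Then the earliest inversion witness in q' (if any) is ≥ i. -/
/-- Swapping the qualities of the earliest inversion witness `i` and its
earliest inversion partner `k` creates no inversion witness earlier than `i`. -/
theorem stmt_14 (n Q : ℕ) (q : Fin n → Fin Q) (i k : Fin n)
    (hik : i < k) (hq : q k < q i)
    (hi_earliest : ∀ j : Fin n, (∃ l, j < l ∧ q l < q j) → i ≤ j)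
    (hk_earliest : ∀ k' : Fin n, i < k' → q k' < q i → k ≤ k') :
    ∀ j : Fin n,
      (∃ l, j < l ∧
        Function.update (Function.update q i (q k)) k (q i) l <
          Function.update (Function.update q i (q k)) k (q i) j) →
      i ≤ j := by
  intro j ⟨l, hjl, hlt⟩
  by_contra hji
  push_neg at hji
  have hjne_i : j ≠ i := ne_of_lt hji
  have hjne_k : j ≠ k := ne_of_lt (lt_trans hji hik)
  have hqj : Function.update (Function.update q i (q k)) k (q i) j = q j := by
    rw [Function.update_of_ne hjne_k, Function.update_of_ne hjne_i]
  rw [hqj] at hlt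
  have : ∃ l', j < l' ∧ q l' < q j := by
    by_cases hlk : l = k
    · rw [hlk, Function.update_self] at hlt
      exact ⟨k, lt_trans hji hik, lt_trans hq hlt⟩
    · by_cases hli : l = i
      · rw [hli, Function.update_of_ne (ne_of_lt hik), Function.update_self] at hlt
        exact ⟨k, lt_trans hji hik, hlt⟩
      · rw [Function.update_of_ne hlk, Function.update_of_ne hli] at hlt
        exact ⟨l, hjl, hlt⟩
  exact absurd (hi_earliest j this) (not_le.mpr hji)
end
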